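/- arXiv:2304.02132 — 7 statements merged into one kernel-verified Lean document; each statement's English description precedes it below -/
import Mathlib

section
/- Suppose Λ is a directed partial order with no maximal element and 𝒮 = ⟨⟨S_u : u ∈ Λ⟩, ℛ⟩ is a Λ-system of finite width. Then 𝒮 has a cofinal branch. -/
/-!
Extend the tail filter of `Λ` to an ultrafilter `U` and enumerate all levels by one finite index
set. Completeness gives, for each `u`, edges from level `u` to `U`-almost every level; as there are
finitely many relations and indices, a single relation `i u` and indices `k u`, `k' u` serve
`U`-almost every level. Again by finiteness `(i u, k' u)` is `U`-almost constant, say `(i, k')`: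
the points with index `k u` on those levels `u` all lie `R i`-below the point with index `k'` on
`U`-almost every level, hence are pairwise compatible, and they are cofinal because `U` refines the
tail filter.
-/

universe u

open Cardinal

/-- `Λ` is `κ`-directed: every subset of size `< κ` has an upper bound. -/
def IsDir (Λ : Type u) [Preorder Λ] (κ : Cardinal.{u}) : Prop :=
  ∀ s : Set Λ, #s < κ → ∃ ub : Λ, ∀ x ∈ s, x ≤ ub

/-- `⟨⟨S_u⟩, ℛ⟩` is a `Λ`-system, where the level of `x : σ` is `ℓ x` (so the
levels `S_u = ℓ ⁻¹' {u}` are automatically pairwise disjoint) and the set of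
relations is `{R i | i : ι}`. -/
structure IsLSystem {Λ : Type u} [Preorder Λ] {σ ι : Type u}
    (ℓ : σ → Λ) (R : ι → σ → σ → Prop) : Prop where
  lvl_ne : ∀ u : Λ, ∃ x : σ, ℓ x = u
  idx_ne : Nonempty ι
  trans : ∀ i : ι, Transitive (R i)
  lt_lvl : ∀ (i : ι) (x y : σ), R i x y → ℓ x < ℓ y
  treelike : ∀ (i : ι) (x y z : σ), R i x z → R i y z → ℓ x ≤ ℓ y → (R i x y ∨ x = y)
  complete : ∀ ⦃u v : Λ⦄, u < v → ∃ (i : ι) (x y : σ), ℓ x = u ∧ ℓ y = v ∧ R i x y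

/-- The width of a system: `max(sup_u |S_u|, |ℛ|)`. -/
noncomputable def sysWidth {Λ : Type u} [Preorder Λ] {σ ι : Type u}
    (ℓ : σ → Λ) (_R : ι → σ → σ → Prop) : Cardinal.{u} :=
  max (⨆ u : Λ, #{x : σ // ℓ x = u}) #ι

/-- `x` and `y` are compatible with respect to the relation `r`. -/
def SysCompat {σ : Type u} (r : σ → σ → Prop) (x y : σ) : Prop :=
  ∃ z : σ, (r x z ∨ x = z) ∧ (r y z ∨ y = z)

/-- `b` is a branch through the relation `r`: pairwise compatible. -/
def IsSysBranch {σ : Type u} (r : σ → σ → Prop) (b : Set σ) : Prop :=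
  ∀ x ∈ b, ∀ y ∈ b, SysCompat r x y

/-- The system has a cofinal branch through one of its relations. -/
def HasCofBranch {Λ : Type u} [Preorder Λ] {σ ι : Type u}
    (ℓ : σ → Λ) (R : ι → σ → σ → Prop) : Prop :=
  ∃ (i : ι) (b : Set σ), IsSysBranch (R i) b ∧ ∀ u : Λ, ∃ x ∈ b, u ≤ ℓ x

open Filter Function

section Width

variable {Λ σ ι : Type u} [Preorder Λ] {ℓ : σ → Λ} {R : ι → σ → σ → Prop}

lemma finite_of_sysWidth_lt_aleph0 (hfin : sysWidth ℓ R < ℵ₀) : Finite ι :=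
  lt_aleph0_iff_finite.mp ((le_max_right _ _).trans_lt hfin)

lemma exists_card_level_le_of_sysWidth_lt_aleph0 (hfin : sysWidth ℓ R < ℵ₀) :
    ∃ n : ℕ, ∀ u, #{x // ℓ x = u} ≤ n := by
  obtain ⟨n, hn⟩ := lt_aleph0.mp ((le_max_left _ _).trans_lt hfin)
  exact ⟨n, fun u => hn ▸ le_ciSup bddAbove_of_small u⟩

end Width

lemma exists_fin_enum_of_card_fiber_le {α β : Type*} {ℓ : α → β} (hℓ : Surjective ℓ) {n : ℕ}
    (hcard : ∀ b, #{a // ℓ a = b} ≤ n) :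
    ∃ e : β → Fin n → α, (∀ b k, ℓ (e b k) = b) ∧ ∀ a, ∃ k, e (ℓ a) k = a := by
  have hemb : ∀ b, Nonempty ({a // ℓ a = b} ↪ Fin n) := fun b =>
    lift_mk_le'.mp (by simpa [lift_mk_fin] using hcard b)
  have : ∀ b, Nonempty {a // ℓ a = b} := fun b => (hℓ b).elim fun a ha => ⟨⟨a, ha⟩⟩
  let g b := (hemb b).some
  refine ⟨fun b k => (invFun (g b) k).1, fun b k => (invFun (g b) k).2, fun a => ?_⟩
  exact ⟨g (ℓ a) ⟨a, rfl⟩, congrArg Subtype.val (leftInverse_invFun (g (ℓ a)).injective _)⟩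

lemma IsDir.atTop_neBot {Λ : Type u} [Preorder Λ] (hdir : IsDir Λ ℵ₀) :
    (atTop : Filter Λ).NeBot := by
  refine atTop_neBot_iff.mpr ⟨?_, ⟨fun a b => ?_⟩⟩
  · obtain ⟨u, -⟩ := hdir ∅ (by simpa using aleph0_pos)
    exact ⟨u⟩
  · obtain ⟨c, hc⟩ := hdir {a, b} (Set.toFinite _).lt_aleph0
    exact ⟨c, hc a (by simp), hc b (by simp)⟩

lemma eventually_gt_of_le_atTop {Λ : Type*} [Preorder Λ] (hnomax : ∀ u : Λ, ∃ v, u < v)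
    {l : Filter Λ} (hl : l ≤ atTop) (u : Λ) : ∀ᶠ w in l, u < w :=
  let ⟨v, huv⟩ := hnomax u
  ((eventually_ge_atTop v).filter_mono hl).mono fun _ hvw => huv.trans_le hvw

lemma isSysBranch_of_eventually {α σ : Type*} {l : Filter α} [l.NeBot] {r : σ → σ → Prop}
    {f : α → σ} {b : Set σ} (h : ∀ x ∈ b, ∀ᶠ w in l, r x (f w)) : IsSysBranch r b :=
  fun x hx y hy =>
    let ⟨w, hxw, hyw⟩ := ((h x hx).and (h y hy)).exists
    ⟨f w, .inl hxw, .inl hyw⟩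

lemma exists_eventually_rel_of_complete {Λ σ ι K : Type*} [Preorder Λ] [Finite ι] [Finite K]
    {ℓ : σ → Λ} {R : ι → σ → σ → Prop} {e : Λ → K → σ} {U : Ultrafilter Λ}
    (hcomplete : ∀ ⦃u v : Λ⦄, u < v → ∃ (i : ι) (x y : σ), ℓ x = u ∧ ℓ y = v ∧ R i x y)
    (he : ∀ x, ∃ k, e (ℓ x) k = x) {u : Λ} (hU : ∀ᶠ w in U, u < w) :
    ∃ (i : ι) (k k' : K), ∀ᶠ w in U, R i (e u k) (e w k') := by
  have hedge : ∀ᶠ w in U, ∃ t : ι × K × K, R t.1 (e u t.2.1) (e w t.2.2) := hU.mono fun w huw => by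
    obtain ⟨i, x, y, rfl, rfl, hxy⟩ := hcomplete huw
    obtain ⟨k, hk⟩ := he x
    obtain ⟨k', hk'⟩ := he y
    exact ⟨(i, k, k'), by rwa [hk, hk']⟩
  obtain ⟨⟨i, k, k'⟩, h⟩ := Ultrafilter.eventually_exists_iff.mp hedge
  exact ⟨i, k, k', h⟩

theorem stmt1 {Λ : Type u} [PartialOrder Λ]
    (hdir : IsDir Λ ℵ₀) (hnomax : ∀ u : Λ, ∃ v : Λ, u < v)
    {σ ι : Type u} (ℓ : σ → Λ) (R : ι → σ → σ → Prop)
    (hsys : IsLSystem ℓ R) (hfin : sysWidth ℓ R < ℵ₀) :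
    HasCofBranch ℓ R := by
  have := finite_of_sysWidth_lt_aleph0 hfin
  obtain ⟨n, hn⟩ := exists_card_level_le_of_sysWidth_lt_aleph0 hfin
  obtain ⟨e, he_lvl, he⟩ := exists_fin_enum_of_card_fiber_le hsys.lvl_ne hn
  have := hdir.atTop_neBot
  obtain ⟨U, hU⟩ := Ultrafilter.exists_le (atTop : Filter Λ)
  choose i k k' hik using fun u =>
    exists_eventually_rel_of_complete hsys.complete he (eventually_gt_of_le_atTop hnomax hU u)
  obtain ⟨p, hp⟩ : ∃ p : ι × Fin n, ∀ᶠ u in U, (i u, k' u) = p :=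
    Ultrafilter.eventually_exists_iff.mp (.of_forall fun u => ⟨_, rfl⟩)
  refine ⟨p.1, {x | ∃ u, (i u, k' u) = p ∧ e u (k u) = x},
    isSysBranch_of_eventually (l := U) (f := fun w => e w p.2) ?_, fun v => ?_⟩
  · rintro _ ⟨u, rfl, rfl⟩
    exact hik u
  · obtain ⟨u, hvu, hu⟩ := (((eventually_ge_atTop v).filter_mono hU).and hp).exists
    exact ⟨e u (k u), ⟨u, hu, rfl⟩, (he_lvl u _).symm ▸ hvu⟩
end

section
/- Suppose κ is a strongly compact cardinal, Λ is a directed partial order with no maximal element whose directedness d_Λ is at least κ, and 𝒮 is a Λ-system with width(𝒮) < κ. Then 𝒮 has a cofinal branch. -/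
/-!
Statement 2: If κ is strongly compact, Λ is a directed partial order (no maximal
element) with d_Λ ≥ κ (i.e. Λ is κ-directed), and 𝒮 is a Λ-system of width < κ,
then 𝒮 has a cofinal branch.
-/

universe u

open Cardinal

/-- `F` is a `κ`-complete filter: closed under intersections of `< κ` members. -/
def IsKComplete {α : Type u} (κ : Cardinal.{u}) (F : Filter α) : Prop :=
  ∀ s : Set (Set α), #s < κ → (∀ t ∈ s, t ∈ F) → ⋂₀ s ∈ F

/-- `κ` is strongly compact: every `κ`-complete filter (on any set) extends to a
`κ`-complete ultrafilter. -/
def IsStronglyCompact (κ : Cardinal.{u}) : Prop :=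
  ∀ (α : Type u) (F : Filter α), F.NeBot → IsKComplete κ F →
    ∃ U : Ultrafilter α, (U : Filter α) ≤ F ∧ IsKComplete κ (U : Filter α)

/-
Extend the filter of upper cones of `Λ` to a `κ`-complete ultrafilter `U`. Since the width is
below `κ`, all levels can be coded injectively into one set `M` of size `< κ`. For `u < v` pick a
relation `R i` and `x ∈ S_u`, `y ∈ S_v` with `x <_R y`; for fixed `u`, the data `(i, x, code y)`
take fewer than `κ` values, so one value `(i_u, x_u, m_u)` is taken for `U`-almost all `v`. By
`κ`-directedness some pair `(i, m)` equals `(i_u, m_u)` for cofinally many `u`. For two such `u`,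
`u'` there is a `v` in both `U`-large sets; the witnesses above `x_u` and `x_u'` at level `v` have
the same code `m`, hence coincide, so the `x_u` form a cofinal branch through `R i`.
-/

open Filter

section Directedness

variable {Λ : Type u} [Preorder Λ] {κ μ : Cardinal.{u}}

theorem IsDir.max (hκ : IsDir Λ κ) (hμ : IsDir Λ μ) : IsDir Λ (max κ μ) := fun s hs =>
  (lt_max_iff.mp hs).elim (hκ s) (hμ s)

theorem IsDir.nonempty (h : IsDir Λ κ) (hκ : 0 < κ) : Nonempty Λ :=
  let ⟨ub, _⟩ := h ∅ (by simpa using hκ)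
  ⟨ub⟩

theorem IsDir.isDirectedOrder (h : IsDir Λ κ) (hκ : 2 < κ) : IsDirectedOrder Λ where
  directed a b := by
    have hcard : #({a, b} : Set Λ) ≤ 2 :=
      Cardinal.mk_insert_le.trans (by simp [one_add_one_eq_two])
    obtain ⟨ub, hub⟩ := h {a, b} (hcard.trans_lt hκ)
    exact ⟨ub, hub a (by simp), hub b (by simp)⟩

theorem IsDir.exists_cofinal_fiber (h : IsDir Λ κ) {γ : Type u} (hγ : #γ < κ) (f : Λ → γ) :
    ∃ c, ∀ w, ∃ u, w ≤ u ∧ f u = c := by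
  by_contra! hcon
  choose w hw using hcon
  obtain ⟨ub, hub⟩ := h (Set.range w) (Cardinal.mk_range_le.trans_lt hγ)
  exact hw (f ub) ub (hub _ ⟨_, rfl⟩) rfl

theorem isKComplete_atTop [Nonempty Λ] [IsDirectedOrder Λ] (h : IsDir Λ κ) :
    IsKComplete κ (atTop : Filter Λ) := by
  intro s hs hmem
  choose a ha using fun t : s => mem_atTop_sets.mp (hmem t t.2)
  obtain ⟨ub, hub⟩ := h (Set.range a) (Cardinal.mk_range_le.trans_lt hs)
  exact mem_atTop_sets.mpr ⟨ub, fun b hb t ht => ha ⟨t, ht⟩ b ((hub _ ⟨_, rfl⟩).trans hb)⟩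

end Directedness

section Completeness

variable {α : Type u} {κ μ : Cardinal.{u}}

theorem IsKComplete.max {F : Filter α} (hκ : IsKComplete κ F) (hμ : IsKComplete μ F) :
    IsKComplete (max κ μ) F := fun s hs =>
  (lt_max_iff.mp hs).elim (hκ s) (hμ s)

theorem isKComplete_aleph0 (F : Filter α) : IsKComplete ℵ₀ F := fun _ hs hmem =>
  (sInter_mem (Cardinal.lt_aleph0_iff_set_finite.mp hs)).mpr hmem

theorem IsKComplete.exists_eventually_of_eventually_exists {U : Ultrafilter α}
    (hU : IsKComplete κ (U : Filter α)) {γ : Type u} (hγ : #γ < κ) {p : α → γ → Prop}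
    (h : ∀ᶠ a in (U : Filter α), ∃ c, p a c) : ∃ c, ∀ᶠ a in (U : Filter α), p a c := by
  by_contra! hcon
  have hnot : ∀ᶠ a in (U : Filter α), ∀ c, ¬p a c := by
    have := hU (Set.range fun c a => ¬p a c) (Cardinal.mk_range_le.trans_lt hγ)
      (by rintro _ ⟨c, rfl⟩; exact hcon c)
    filter_upwards [this] with a ha c using Set.mem_sInter.mp ha _ ⟨c, rfl⟩
  obtain ⟨a, ⟨c, hc⟩, hnc⟩ := (h.and hnot).exists
  exact hnc c hc

end Completeness

theorem exists_levelCode {Λ σ : Type u} (ℓ : σ → Λ) :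
    ∃ (M : Type u) (code : σ → M), #M = ⨆ u, #{x : σ // ℓ x = u} ∧
      ∀ u, Set.InjOn code (ℓ ⁻¹' {u}) := by
  set μ := ⨆ u, #{x : σ // ℓ x = u}
  have E : ∀ u, {x : σ // ℓ x = u} ↪ μ.out := fun u => Classical.choice <| by
    rw [← Cardinal.le_def, Cardinal.mk_out]
    exact le_ciSup Cardinal.bddAbove_of_small u
  have hcode : ∀ x u (hx : ℓ x = u), E (ℓ x) ⟨x, rfl⟩ = E u ⟨x, hx⟩ := by
    rintro x _ rfl; rfl
  refine ⟨μ.out, fun x => E (ℓ x) ⟨x, rfl⟩, Cardinal.mk_out μ, fun u x hx y hy hxy => ?_⟩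
  simp only [hcode x u hx, hcode y u hy] at hxy
  exact congrArg Subtype.val ((E u).injective hxy)

section Branches

variable {Λ : Type u} [Preorder Λ] {σ ι M : Type u} {ℓ : σ → Λ} {R : ι → σ → σ → Prop}

theorem exists_eventually_successor {κ : Cardinal.{u}} (hκ : ℵ₀ ≤ κ) (hsys : IsLSystem ℓ R)
    (code : σ → M) (hι : #ι < κ) (hM : #M < κ) {U : Ultrafilter Λ}
    (hU : IsKComplete κ (U : Filter Λ)) (u : Λ) (hlevel : #{x : σ // ℓ x = u} < κ)
    (hgt : ∀ᶠ v in (U : Filter Λ), u < v) :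
    ∃ (i : ι) (x : σ), ℓ x = u ∧ ∃ m : M,
      ∀ᶠ v in (U : Filter Λ), ∃ y, ℓ y = v ∧ R i x y ∧ code y = m := by
  have hcard : #(ι × {x : σ // ℓ x = u} × M) < κ := by
    simpa only [Cardinal.mk_prod, Cardinal.lift_id] using
      Cardinal.mul_lt_of_lt hκ hι (Cardinal.mul_lt_of_lt hκ hlevel hM)
  have hwit : ∀ᶠ v in (U : Filter Λ), ∃ c : ι × {x : σ // ℓ x = u} × M,
      ∃ y, ℓ y = v ∧ R c.1 c.2.1 y ∧ code y = c.2.2 := hgt.mono fun v huv => by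
    obtain ⟨i, x, y, hx, hy, hxy⟩ := hsys.complete huv
    exact ⟨(i, ⟨x, hx⟩, code y), y, hy, hxy, rfl⟩
  obtain ⟨⟨i, ⟨x, hx⟩, m⟩, hm⟩ := hU.exists_eventually_of_eventually_exists hcard hwit
  exact ⟨i, x, hx, m, hm⟩

theorem hasCofBranch_of_eventually_successor {κ : Cardinal.{u}} (hdir : IsDir Λ κ)
    (code : σ → M) (hcode : ∀ u, Set.InjOn code (ℓ ⁻¹' {u})) (hιM : #(ι × M) < κ)
    (U : Filter Λ) [U.NeBot]
    (h : ∀ u, ∃ (i : ι) (x : σ), ℓ x = u ∧ ∃ m : M,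
      ∀ᶠ v in U, ∃ y, ℓ y = v ∧ R i x y ∧ code y = m) :
    HasCofBranch ℓ R := by
  choose i x hx m hm using h
  obtain ⟨⟨i₀, m₀⟩, hcof⟩ := hdir.exists_cofinal_fiber hιM fun u => (i u, m u)
  refine ⟨i₀, x '' {u | (i u, m u) = (i₀, m₀)}, ?_, fun w => ?_⟩
  · rintro _ ⟨a, ha, rfl⟩ _ ⟨b, hb, rfl⟩
    obtain ⟨hia, hma⟩ := Prod.mk.inj ha
    obtain ⟨hib, hmb⟩ := Prod.mk.inj hb
    obtain ⟨v, ⟨ya, hya, hxa, hca⟩, ⟨yb, hyb, hxb, hcb⟩⟩ := ((hm a).and (hm b)).exists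
    have hy : ya = yb := hcode v hya hyb (by rw [hca, hcb, hma, hmb])
    subst hy
    exact ⟨ya, .inl (hia ▸ hxa), .inl (hib ▸ hxb)⟩
  · obtain ⟨u, hwu, hu⟩ := hcof w
    exact ⟨x u, ⟨u, hu, rfl⟩, (hx u).symm ▸ hwu⟩

end Branches

theorem stmt2 {Λ : Type u} [PartialOrder Λ] (κ : Cardinal.{u})
    (hsc : IsStronglyCompact κ)
    (hnomax : ∀ u : Λ, ∃ v : Λ, u < v)
    (hdir : IsDir Λ κ) (hdir₀ : IsDir Λ ℵ₀)
    {σ ι : Type u} (ℓ : σ → Λ) (R : ι → σ → σ → Prop)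
    (hsys : IsLSystem ℓ R) (hw : sysWidth ℓ R < κ) :
    HasCofBranch ℓ R := by
  have := hdir₀.nonempty Cardinal.aleph0_pos
  have := hdir₀.isDirectedOrder (Cardinal.natCast_lt_aleph0 (n := 2))
  have : NoMaxOrder Λ := ⟨hnomax⟩
  obtain ⟨U, hUtop, hU⟩ := hsc Λ atTop atTop_neBot (isKComplete_atTop hdir)
  -- Passing to `max κ ℵ₀` makes products of cardinals below the bound stay below it.
  set κ' := max κ ℵ₀
  have hU' : IsKComplete κ' (U : Filter Λ) := hU.max (isKComplete_aleph0 _)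
  have hw' : sysWidth ℓ R < κ' := hw.trans_le (le_max_left _ _)
  have hlevels : (⨆ u, #{x : σ // ℓ x = u}) < κ' := (le_max_left _ _).trans_lt hw'
  have hι : #ι < κ' := (le_max_right _ _).trans_lt hw'
  obtain ⟨M, code, hM, hcode⟩ := exists_levelCode ℓ
  have hικ : #(ι × M) < κ' := by
    simpa only [Cardinal.mk_prod, Cardinal.lift_id] using
      Cardinal.mul_lt_of_lt (le_max_right _ _) hι (hM ▸ hlevels)
  refine hasCofBranch_of_eventually_successor (hdir.max hdir₀) code hcode hικ U fun u => ?_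
  exact exists_eventually_successor (le_max_right _ _) hsys code hι (hM ▸ hlevels) hU' u
    ((le_ciSup Cardinal.bddAbove_of_small u).trans_lt hlevels) (hUtop (Ioi_mem_atTop u))
end

section
/- Suppose Λ is a directed partial order with no maximal element, 𝒮 is a Λ-system with width(𝒮) = θ < d_Λ, and {b_i : i < θ} is a full set of branches in 𝒮 (each b_i is a branch, and for every u ∈ Λ there is i < θ with b_i ∩ S_u ≠ ∅). Then there is i < θ such that b_i is a cofinal branch in 𝒮. -/
/-!
If no `b i` were cofinal, each would be bounded away from some level `u i`. There are at most
`θ < d_Λ` such levels, so they have a common upper bound `v`; but the full family meets `S_v`,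
and the branch meeting it reaches beyond its own `u i`.
-/

universe u

open Cardinal

/-- The directedness of `Λ`: the largest `κ` such that `Λ` is `κ`-directed. -/
noncomputable def dirCard (Λ : Type u) [Preorder Λ] : Cardinal.{u} :=
  sSup {κ : Cardinal.{u} | IsDir Λ κ}

theorem isDir_zero (Λ : Type u) [Preorder Λ] : IsDir Λ 0 :=
  fun _ hs => absurd hs zero_le.not_gt

theorem bddAbove_of_mk_lt_dirCard {Λ : Type u} [Preorder Λ] {s : Set Λ}
    (hs : #s < dirCard Λ) : BddAbove s := by
  obtain ⟨κ, hκ, hsκ⟩ := exists_lt_of_lt_csSup ⟨0, isDir_zero Λ⟩ hs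
  exact hκ s hsκ

theorem bddAbove_range_of_mk_lt_dirCard {Λ I : Type u} [Preorder Λ] (f : I → Λ)
    (hI : #I < dirCard Λ) : BddAbove (Set.range f) :=
  bddAbove_of_mk_lt_dirCard (Cardinal.mk_range_le.trans_lt hI)

theorem exists_cofinal_of_forall_exists_level {Λ σ I : Type u} [Preorder Λ] (ℓ : σ → Λ)
    (b : I → Set σ) (hI : #I < dirCard Λ) (hfull : ∀ u : Λ, ∃ i : I, ∃ x ∈ b i, ℓ x = u) :
    ∃ i : I, ∀ u : Λ, ∃ x ∈ b i, u ≤ ℓ x := by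
  by_contra! hbounded
  choose u hu using hbounded
  obtain ⟨v, hv⟩ := bddAbove_range_of_mk_lt_dirCard u hI
  obtain ⟨i, x, hx, rfl⟩ := hfull v
  exact hu i x hx (hv ⟨i, rfl⟩)

theorem stmt4_general {Λ : Type u} [PartialOrder Λ]
    {σ ι : Type u} (ℓ : σ → Λ) (R : ι → σ → σ → Prop)
    (hθ : sysWidth ℓ R < dirCard Λ)
    (I : Type u) (hI : #I = sysWidth ℓ R)
    (b : I → Set σ) (Ri : I → ι)
    (hbr : ∀ i : I, IsSysBranch (R (Ri i)) (b i))
    (hfull : ∀ u : Λ, ∃ (i : I), ∃ x ∈ b i, ℓ x = u) :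
    ∃ i : I, IsSysBranch (R (Ri i)) (b i) ∧ ∀ u : Λ, ∃ x ∈ b i, u ≤ ℓ x := by
  obtain ⟨i, hi⟩ := exists_cofinal_of_forall_exists_level ℓ b (hI ▸ hθ) hfull
  exact ⟨i, hbr i, hi⟩

theorem stmt4 {Λ : Type u} [PartialOrder Λ]
    (hdir : IsDir Λ ℵ₀) (hnomax : ∀ u : Λ, ∃ v : Λ, u < v)
    {σ ι : Type u} (ℓ : σ → Λ) (R : ι → σ → σ → Prop)
    (hsys : IsLSystem ℓ R)
    (hθ : sysWidth ℓ R < dirCard Λ)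
    (I : Type u) (hI : #I = sysWidth ℓ R)
    (b : I → Set σ) (Ri : I → ι)
    (hbr : ∀ i : I, IsSysBranch (R (Ri i)) (b i))
    (hfull : ∀ u : Λ, ∃ (i : I), ∃ x ∈ b i, ℓ x = u) :
    ∃ i : I, IsSysBranch (R (Ri i)) (b i) ∧ ∀ u : Λ, ∃ x ∈ b i, u ≤ ℓ x :=
  stmt4_general ℓ R hθ I hI b Ri hbr hfull
end

section
/- Suppose Λ is a directed partial order, θ is an infinite regular cardinal, and c : Λ^{[2]} → θ is a strongly unbounded subadditive function. Then there is a Λ-system of width θ with no cofinal branch. -/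
/-!
Statement 5: If θ is an infinite regular cardinal and c : Λ^{[2]} → θ is a
strongly unbounded subadditive function on a directed partial order Λ, then
there is a Λ-system of width θ with no cofinal branch.
-/

universe u

open Cardinal

/-- `c` is subadditive on pairs `u <_Λ v`. -/
def IsSubadditiveColoring {Λ : Type u} [Preorder Λ] (c : Λ → Λ → Ordinal.{u}) : Prop :=
  ∀ ⦃u v w : Λ⦄, u < v → v < w →
    c u w ≤ max (c u v) (c v w) ∧ c u v ≤ max (c u w) (c v w)

/-- `c : Λ^{[2]} → θ` is strongly unbounded: on every cofinal `Γ ⊆ Λ`, the image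
of `Γ^{[2]}` under `c` is unbounded in `θ`. -/
def StronglyUnbounded {Λ : Type u} [Preorder Λ] (θ : Cardinal.{u})
    (c : Λ → Λ → Ordinal.{u}) : Prop :=
  ∀ Γ : Set Λ, (∀ u : Λ, ∃ v ∈ Γ, u ≤ v) →
    ∀ i : Ordinal.{u}, i < θ.ord → ∃ u ∈ Γ, ∃ v ∈ Γ, u < v ∧ i ≤ c u v

/-!
Colour the points of each level by `θ`: put `(u, i) <_R (v, i)` exactly when `u < v` and
`c(u, v) ≤ i`. The first subadditivity inequality makes `R` transitive, the second makes it
tree-like, and `c(u, v) < θ` puts every pair of levels in relation. A cofinal branch stays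
inside a single colour `i`, so its levels would form a cofinal `Γ` with `c''Γ^{[2]} ⊆ i + 1`,
contradicting strong unboundedness since `θ` is a limit ordinal.
-/

open Cardinal Order

section LSystem

variable {Λ σ ι : Type u} [Preorder Λ] {ℓ : σ → Λ} {R : ι → σ → σ → Prop}

theorem IsLSystem.rel_of_sysCompat (hS : IsLSystem ℓ R) {i : ι} {x y : σ}
    (hxy : SysCompat (R i) x y) (hlt : ℓ x < ℓ y) : R i x y := by
  obtain ⟨z, hxz | rfl, hyz | rfl⟩ := hxy
  · exact (hS.treelike i x y z hxz hyz hlt.le).resolve_right (by rintro rfl; exact hlt.false)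
  · exact hxz
  · exact absurd (hS.lt_lvl i y x hyz) hlt.not_gt
  · exact absurd hlt (lt_irrefl _)

theorem sysWidth_fst {α : Type u} [Nonempty Λ] (R : ι → Λ × α → Λ × α → Prop) :
    sysWidth (Prod.fst : Λ × α → Λ) R = max #α #ι := by
  have hlevel (u : Λ) : #{x : Λ × α // x.1 = u} = #α := by
    rw [mk_congr (Equiv.prodSubtypeFstEquivSubtypeProd (p := (· = u)))]
    simp
  simp only [sysWidth, hlevel, ciSup_const]

end LSystem

section ColorRel

variable {Λ α : Type u} [Preorder Λ] {c : Λ → Λ → Ordinal.{u}} {ov : α → Ordinal.{u}}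

-- The colour of the point `(u, a)` is the ordinal `ov a`.
def colorRel (c : Λ → Λ → Ordinal.{u}) (ov : α → Ordinal.{u}) (x y : Λ × α) : Prop :=
  x.1 < y.1 ∧ x.2 = y.2 ∧ c x.1 y.1 ≤ ov x.2

theorem colorRel_trans (hsub : IsSubadditiveColoring c) : Transitive (colorRel c ov) := by
  rintro x y z ⟨hxy, hxy₂, hcxy⟩ ⟨hyz, hyz₂, hcyz⟩
  refine ⟨hxy.trans hyz, hxy₂.trans hyz₂, (hsub hxy hyz).1.trans (max_le hcxy ?_)⟩
  rwa [hxy₂]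

theorem snd_eq_of_sysCompat_colorRel {x y : Λ × α} (h : SysCompat (colorRel c ov) x y) :
    x.2 = y.2 := by
  obtain ⟨z, hxz, hyz⟩ := h
  have snd_eq {w : Λ × α} : colorRel c ov w z ∨ w = z → w.2 = z.2
    | .inl hwz => hwz.2.1
    | .inr rfl => rfl
  exact (snd_eq hxz).trans (snd_eq hyz).symm

theorem not_hasCofBranch_colorRel [Nonempty Λ] {θ : Cardinal.{u}}
    (hS : IsLSystem (Prod.fst : Λ × α → Λ) (fun _ : PUnit.{u + 1} => colorRel c ov))
    (hunb : StronglyUnbounded θ c) (hθ : IsSuccLimit θ.ord) (hov : ∀ a, ov a < θ.ord) :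
    ¬ HasCofBranch (Prod.fst : Λ × α → Λ) (fun _ : PUnit.{u + 1} => colorRel c ov) := by
  rintro ⟨i, b, hb, hcof⟩
  obtain ⟨x₀, hx₀, -⟩ := hcof (Classical.arbitrary Λ)
  have hcofΓ (u : Λ) : ∃ v ∈ Prod.fst '' b, u ≤ v :=
    let ⟨x, hx, hux⟩ := hcof u
    ⟨x.1, ⟨x, hx, rfl⟩, hux⟩
  obtain ⟨-, ⟨x, hx, rfl⟩, -, ⟨y, hy, rfl⟩, hxy, hc⟩ :=
    hunb _ hcofΓ _ (hθ.succ_lt (hov x₀.2))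
  have hcxy : c x.1 y.1 ≤ ov x₀.2 := by
    rw [← snd_eq_of_sysCompat_colorRel (hb x hx x₀ hx₀)]
    exact (hS.rel_of_sysCompat (i := i) (hb x hx y hy) hxy).2.2
  exact (lt_succ (ov x₀.2)).not_ge (hc.trans hcxy)

end ColorRel

section ColorSystem

variable {Λ α : Type u} [PartialOrder Λ] {c : Λ → Λ → Ordinal.{u}} {ov : α → Ordinal.{u}}

theorem isLSystem_colorRel [Nonempty α]
    (hsub : IsSubadditiveColoring c) (hcover : ∀ ⦃u v : Λ⦄, u < v → ∃ a, c u v ≤ ov a) :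
    IsLSystem (Prod.fst : Λ × α → Λ) (fun _ : PUnit.{u + 1} => colorRel c ov) where
  lvl_ne u := ⟨(u, Classical.arbitrary α), rfl⟩
  idx_ne := inferInstance
  trans _ := colorRel_trans hsub
  lt_lvl _ _ _ h := h.1
  treelike := by
    rintro - x y z ⟨hxz, hxz₂, hcxz⟩ ⟨hyz, hyz₂, hcyz⟩ hle
    have hxy₂ : x.2 = y.2 := hxz₂.trans hyz₂.symm
    obtain heq | hlt := hle.eq_or_lt
    · exact .inr (Prod.ext heq hxy₂)
    · refine .inl ⟨hlt, hxy₂, (hsub hlt hyz).2.trans (max_le hcxz ?_)⟩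
      rwa [hxy₂]
  complete u v huv := by
    obtain ⟨a, ha⟩ := hcover huv
    exact ⟨PUnit.unit, (u, a), (v, a), rfl, rfl, huv, rfl, ha⟩

end ColorSystem

theorem stmt5_general {Λ : Type u} [PartialOrder Λ]
    (hdir : IsDir Λ ℵ₀)
    (θ : Cardinal.{u}) (hθinf : ℵ₀ ≤ θ)
    (c : Λ → Λ → Ordinal.{u})
    (hrange : ∀ ⦃u v : Λ⦄, u < v → c u v < θ.ord)
    (hsub : IsSubadditiveColoring c) (hunb : StronglyUnbounded θ c) :
    ∃ (σ ι : Type u) (ℓ : σ → Λ) (R : ι → σ → σ → Prop),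
      IsLSystem ℓ R ∧ sysWidth ℓ R = θ ∧ ¬ HasCofBranch ℓ R := by
  have : Nonempty Λ := let ⟨u, _⟩ := hdir ∅ (by simp [aleph0_pos]); ⟨u⟩
  have : Nonempty θ.ord.ToType := nonempty_ord_toType (aleph0_pos.trans_le hθinf).ne'
  let ov (a : θ.ord.ToType) : Ordinal.{u} := a.toOrd
  have hS : IsLSystem (Prod.fst : Λ × θ.ord.ToType → Λ)
      (fun _ : PUnit.{u + 1} => colorRel c ov) :=
    isLSystem_colorRel hsub fun u v huv =>
      ⟨Ordinal.ToType.mk ⟨c u v, hrange huv⟩, by simp [ov]⟩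
  refine ⟨_, _, _, _, hS, ?_,
    not_hasCofBranch_colorRel hS hunb (isSuccLimit_ord hθinf) fun a => a.toOrd.2⟩
  rw [sysWidth_fst, mk_ord_toType, mk_punit]
  exact max_eq_left (one_le_aleph0.trans hθinf)

theorem stmt5 {Λ : Type u} [PartialOrder Λ]
    (hdir : IsDir Λ ℵ₀) (hnomax : ∀ u : Λ, ∃ v : Λ, u < v)
    (θ : Cardinal.{u}) (hθreg : θ.IsRegular) (hθinf : ℵ₀ ≤ θ)
    (c : Λ → Λ → Ordinal.{u})
    (hrange : ∀ ⦃u v : Λ⦄, u < v → c u v < θ.ord)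
    (hsub : IsSubadditiveColoring c) (hunb : StronglyUnbounded θ c) :
    ∃ (σ ι : Type u) (ℓ : σ → Λ) (R : ι → σ → σ → Prop),
      IsLSystem ℓ R ∧ sysWidth ℓ R = θ ∧ ¬ HasCofBranch ℓ R :=
  stmt5_general hdir θ hθinf c hrange hsub hunb
end

section
/- With notation as in the previous statement (x_j := x ∩ D(j,γ_x), and c(x,y) defined for x ⊊ y in 𝒫_κ λ as the least i < θ such that x_j = y_j ∩ x for all j ∈ [i,θ)), the coloring c : (𝒫_κ λ)^{[2]} → θ is subadditive: for x ⊊ y ⊊ z in 𝒫_κ λ, c(x,z) ≤ max(c(x,y), c(y,z)) and c(x,y) ≤ max(c(x,z), c(y,z)). -/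
open Cardinal

/-- `𝒫_κ λ`: subsets of `λ` (ordinals `< L`) of cardinality `< κ`. -/
def Pk (κ : Cardinal.{0}) (L : Ordinal.{0}) : Set (Set Ordinal.{0}) :=
  {x | (∀ α ∈ x, α < L) ∧ #x < Cardinal.lift.{1} κ}

/-- The supremum of a set of ordinals. -/
noncomputable def supS (x : Set Ordinal.{0}) : Ordinal.{0} := sSup x

/-- The strong supremum `ssup(x) = sup {α + 1 : α ∈ x}` of a set of ordinals. -/
noncomputable def ssupS (x : Set Ordinal.{0}) : Ordinal.{0} :=
  sSup (Order.succ '' x)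

/-- A `θ`-covering matrix for `L`: `D i β` for `i < θ.ord`, `β < L`, each column
`⊆`-increasing with union `β`, and coherent upwards. -/
structure CovMatrix (θ : Cardinal.{0}) (L : Ordinal.{0}) where
  D : Ordinal.{0} → Ordinal.{0} → Set Ordinal.{0}
  mono : ∀ ⦃i j β : Ordinal.{0}⦄, i ≤ j → j < θ.ord → β < L → D i β ⊆ D j β
  union : ∀ β : Ordinal.{0}, β < L → (⋃ i ∈ Set.Iio θ.ord, D i β) = Set.Iio β
  upcoh : ∀ ⦃β γ : Ordinal.{0}⦄, β < γ → γ < L →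
    ∀ i : Ordinal.{0}, i < θ.ord → ∃ j : Ordinal.{0}, j < θ.ord ∧ D i β ⊆ D j γ

namespace CovMatrix

variable {θ : Cardinal.{0}} {L : Ordinal.{0}}

/-- `𝒟` is transitive: `β ∈ D(i,γ)` implies `D(i,β) ⊆ D(i,γ)`. -/
def IsTransitive (M : CovMatrix θ L) : Prop :=
  ∀ i : Ordinal.{0}, i < θ.ord → ∀ β γ : Ordinal.{0}, γ < L →
    β ∈ M.D i γ → M.D i β ⊆ M.D i γ

/-- `C` is club in `β`: bounded by `β`, unbounded in `β`, and closed below `β`. -/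
def IsClubIn (C : Set Ordinal.{0}) (β : Ordinal.{0}) : Prop :=
  (∀ α ∈ C, α < β) ∧ (∀ α : Ordinal.{0}, α < β → ∃ γ ∈ C, α ≤ γ) ∧
  (∀ α : Ordinal.{0}, α < β → 0 < α →
    (∀ γ : Ordinal.{0}, γ < α → ∃ δ ∈ C, γ < δ ∧ δ < α) → α ∈ C)

/-- `𝒟` is uniform: every limit `β < L` has some `D(i,β)` containing a club. -/
def IsUniform (M : CovMatrix θ L) : Prop :=
  ∀ β : Ordinal.{0}, β < L → Order.IsSuccLimit β →
    ∃ i : Ordinal.{0}, i < θ.ord ∧ ∃ C : Set Ordinal.{0}, C ⊆ M.D i β ∧ IsClubIn C β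

/-- `CP(𝒟)`: there is an unbounded `A ⊆ L` every `θ`-sized subset of which is
covered by some entry of `𝒟`. -/
def CP (M : CovMatrix θ L) : Prop :=
  ∃ A : Set Ordinal.{0}, (∀ α ∈ A, α < L) ∧
    (∀ α : Ordinal.{0}, α < L → ∃ β ∈ A, α ≤ β) ∧
    ∀ X : Set Ordinal.{0}, X ⊆ A → #X = Cardinal.lift.{1} θ →
      ∃ i : Ordinal.{0}, i < θ.ord ∧ ∃ β : Ordinal.{0}, β < L ∧ X ⊆ M.D i β

end CovMatrix

/-- A concrete `𝒫_κ λ`-system. -/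
structure ConcreteSystem (κ : Cardinal.{0}) (L : Ordinal.{0}) where
  A : Set (Set Ordinal.{0})
  hA : A ⊆ Pk κ L
  cofinal : ∀ x ∈ Pk κ L, ∃ y ∈ A, x ⊆ y
  S : Set Ordinal.{0} → Set (Set Ordinal.{0})
  S_ne : ∀ x ∈ A, (S x).Nonempty
  S_sub : ∀ x ∈ A, ∀ t ∈ S x, t ⊆ x
  coh : ∀ x ∈ A, ∀ y ∈ A, x ⊆ y → ∃ t ∈ S y, t ∩ x ∈ S x

namespace ConcreteSystem

variable {κ : Cardinal.{0}} {L : Ordinal.{0}}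

/-- The width of a concrete system: `sup {|S_x| : x ∈ A}`. -/
noncomputable def width (𝒮 : ConcreteSystem κ L) : Cardinal.{1} :=
  ⨆ x : 𝒮.A, #(𝒮.S x)

/-- `b ⊆ λ` is a cofinal branch: `{x ∈ A : b ∩ x ∈ S_x}` is `⊆`-cofinal. -/
def CofBranch (𝒮 : ConcreteSystem κ L) (b : Set Ordinal.{0}) : Prop :=
  (∀ β ∈ b, β < L) ∧ ∀ x ∈ Pk κ L, ∃ y ∈ 𝒮.A, x ⊆ y ∧ b ∩ y ∈ 𝒮.S y

end ConcreteSystem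

namespace Set

variable {α : Type*} {x y X Y Z : Set α}

theorem eq_inter_trans (hxy : x ⊆ y) (h₁ : X = Y ∩ x) (h₂ : Y = Z ∩ y) : X = Z ∩ x := by
  rw [h₁, h₂, inter_assoc, inter_eq_right.2 hxy]

theorem eq_inter_of_eq_inter (hxy : x ⊆ y) (h₁ : X = Z ∩ x) (h₂ : Y = Z ∩ y) : X = Y ∩ x := by
  rw [h₁, h₂, inter_assoc, inter_eq_right.2 hxy]

end Set

theorem stmt8_general (θ κ : Cardinal.{0}) (L : Ordinal.{0})
    (M : CovMatrix θ L)
    (γ : Set Ordinal.{0} → Ordinal.{0})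
    (c : Set Ordinal.{0} → Set Ordinal.{0} → Ordinal.{0})
    -- c(x,y) is the least i < θ with x_j = y_j ∩ x for all j ∈ [i, θ):
    (hc : ∀ x ∈ Pk κ L, ∀ y ∈ Pk κ L, x ⊂ y →
      c x y < θ.ord ∧
      (∀ j : Ordinal.{0}, c x y ≤ j → j < θ.ord →
        x ∩ M.D j (γ x) = (y ∩ M.D j (γ y)) ∩ x) ∧
      ∀ i : Ordinal.{0}, i < c x y →
        ¬ (∀ j : Ordinal.{0}, i ≤ j → j < θ.ord →
            x ∩ M.D j (γ x) = (y ∩ M.D j (γ y)) ∩ x)) :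
    ∀ x ∈ Pk κ L, ∀ y ∈ Pk κ L, ∀ z ∈ Pk κ L, x ⊂ y → y ⊂ z →
      c x z ≤ max (c x y) (c y z) ∧ c x y ≤ max (c x z) (c y z) := by
  intro x hx y hy z hz hxy hyz
  obtain ⟨-, hxy_from, hxy_least⟩ := hc x hx y hy hxy
  obtain ⟨-, hyz_from, -⟩ := hc y hy z hz hyz
  obtain ⟨-, hxz_from, hxz_least⟩ := hc x hx z hz (hxy.trans hyz)
  constructor
  · refine not_lt.1 fun hlt => hxz_least _ hlt fun j hj hjθ => ?_
    exact Set.eq_inter_trans hxy.subset (hxy_from j (le_of_max_le_left hj) hjθ)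
      (hyz_from j (le_of_max_le_right hj) hjθ)
  · refine not_lt.1 fun hlt => hxy_least _ hlt fun j hj hjθ => ?_
    exact Set.eq_inter_of_eq_inter hxy.subset (hxz_from j (le_of_max_le_left hj) hjθ)
      (hyz_from j (le_of_max_le_right hj) hjθ)

theorem stmt8 (μ θ κ : Cardinal.{0}) (L : Ordinal.{0})
    (hθ : θ = (μ.ord).cof) (hμinf : ℵ₀ ≤ μ) (hsing : θ < μ)
    (hκreg : κ.IsRegular) (hκunc : ℵ₀ < κ)
    (hθκ : Order.succ θ < κ) (hκμ : κ < μ)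
    (hL : L = (Order.succ μ).ord)
    (M : CovMatrix θ L)
    (γ : Set Ordinal.{0} → Ordinal.{0})
    (hγ : ∀ x ∈ Pk κ L, γ x < L ∧ ∀ β : Ordinal.{0}, γ x ≤ β → β < L →
      ∃ i : Ordinal.{0}, i < θ.ord ∧ ∀ j : Ordinal.{0}, i ≤ j → j < θ.ord →
        x ∩ M.D j β = x ∩ M.D j (γ x))
    (c : Set Ordinal.{0} → Set Ordinal.{0} → Ordinal.{0})
    -- c(x,y) is the least i < θ with x_j = y_j ∩ x for all j ∈ [i, θ):
    (hc : ∀ x ∈ Pk κ L, ∀ y ∈ Pk κ L, x ⊂ y →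
      c x y < θ.ord ∧
      (∀ j : Ordinal.{0}, c x y ≤ j → j < θ.ord →
        x ∩ M.D j (γ x) = (y ∩ M.D j (γ y)) ∩ x) ∧
      ∀ i : Ordinal.{0}, i < c x y →
        ¬ (∀ j : Ordinal.{0}, i ≤ j → j < θ.ord →
            x ∩ M.D j (γ x) = (y ∩ M.D j (γ y)) ∩ x)) :
    ∀ x ∈ Pk κ L, ∀ y ∈ Pk κ L, ∀ z ∈ Pk κ L, x ⊂ y → y ⊂ z →
      c x z ≤ max (c x y) (c y z) ∧ c x y ≤ max (c x z) (c y z) :=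
  stmt8_general θ κ L M γ c hc
end

section
/- Suppose Λ is a directed partial order with no maximal element, 𝒮 is a Λ-system with a single relation R, and 𝒮 has no cofinal branch. Work in a forcing setting: let ℙ be a poset, ḃ a ℙ-name, p ∈ ℙ a condition forcing 'ḃ is a branch through R in 𝒮 meeting levels indexed by a cofinal subset of Λ'. Then there are q₀, q₁ ≤ p and x₀, x₁ ∈ S such that q_ε forces 'x_ε ∈ ḃ' for ε < 2, and x₀ ⊥_R x₁ (x₀ and x₁ are R-incompatible). -/
/-!
Statement 14 (splitting claim): Suppose Λ is a directed partial order with no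
maximal element, 𝒮 is a Λ-system with a single relation R and no cofinal
branch, ℙ is a poset, ḃ a ℙ-name and p a condition forcing "ḃ is a branch
through R meeting levels indexed by a cofinal subset of Λ". Then there are
q₀, q₁ ≤ p and x₀, x₁ ∈ S such that q_ε ⊩ x_ε ∈ ḃ and x₀ ⊥_R x₁.

The forcing relation is modelled abstractly: `forc q x` means `q ⊩ x ∈ ḃ`. The
hypotheses record exactly that this relation is a ℙ-name for a subset of S which
`p` forces to be a pairwise R-compatible set meeting cofinally many levels.
-/

universe u

open Cardinal

section ForcedBelow

variable {σ P : Type u} [Preorder P]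

/-- The ground-model set `b = {x ∈ S | ∃ q ≤ p, q ⊩ x ∈ ḃ}` of the paper. -/
def forcedBelow (forc : P → σ → Prop) (p : P) : Set σ :=
  {x | ∃ q ≤ p, forc q x}

theorem isSysBranch_forcedBelow {r : σ → σ → Prop} {forc : P → σ → Prop} {p : P}
    (hcompat : ∀ q₀ ≤ p, ∀ q₁ ≤ p, ∀ x₀ x₁, forc q₀ x₀ → forc q₁ x₁ → SysCompat r x₀ x₁) :
    IsSysBranch r (forcedBelow forc p) := by
  rintro x₀ ⟨q₀, hq₀, hx₀⟩ x₁ ⟨q₁, hq₁, hx₁⟩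
  exact hcompat q₀ hq₀ q₁ hq₁ x₀ x₁ hx₀ hx₁

theorem exists_mem_forcedBelow_le_level {Λ : Type u} [Preorder Λ] {ℓ : σ → Λ}
    {forc : P → σ → Prop} {p : P}
    (hcof : ∀ u : Λ, ∃ q ≤ p, ∃ x : σ, forc q x ∧ u ≤ ℓ x) (u : Λ) :
    ∃ x ∈ forcedBelow forc p, u ≤ ℓ x := by
  obtain ⟨q, hq, x, hx, hux⟩ := hcof u
  exact ⟨x, ⟨q, hq, hx⟩, hux⟩

end ForcedBelow

theorem stmt14_general {Λ : Type u} [PartialOrder Λ]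
    {σ : Type u} (ℓ : σ → Λ) (r : σ → σ → Prop)
    (hnobranch : ¬ HasCofBranch ℓ (fun _ : PUnit.{u + 1} => r))
    (P : Type u) [Preorder P] (p : P)
    (forc : P → σ → Prop)
    -- p forces "ḃ meets levels indexed by a cofinal subset of Λ"
    (hcof : ∀ q : P, q ≤ p → ∀ u : Λ, ∃ q' : P, q' ≤ q ∧ ∃ x : σ,
      forc q' x ∧ u ≤ ℓ x) :
    ∃ q₀ : P, q₀ ≤ p ∧ ∃ q₁ : P, q₁ ≤ p ∧ ∃ x₀ x₁ : σ,
      forc q₀ x₀ ∧ forc q₁ x₁ ∧ ¬ SysCompat r x₀ x₁ := by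
  by_contra! hsplit
  exact hnobranch ⟨PUnit.unit, forcedBelow forc p, isSysBranch_forcedBelow hsplit,
    exists_mem_forcedBelow_le_level (hcof p le_rfl)⟩

theorem stmt14 {Λ : Type u} [PartialOrder Λ]
    (hdir : IsDir Λ ℵ₀) (hnomax : ∀ u : Λ, ∃ v : Λ, u < v)
    {σ : Type u} (ℓ : σ → Λ) (r : σ → σ → Prop)
    (hsys : IsLSystem ℓ (fun _ : PUnit.{u + 1} => r))
    (hnobranch : ¬ HasCofBranch ℓ (fun _ : PUnit.{u + 1} => r))
    (P : Type u) [Preorder P] (p : P)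
    (forc : P → σ → Prop)
    -- `forc` is a name: forced membership persists under extension
    (hmono : ∀ ⦃q q' : P⦄, q' ≤ q → ∀ x : σ, forc q x → forc q' x)
    -- p forces "ḃ is a branch through R": any two forced members are compatible
    (hbranch : ∀ q : P, q ≤ p → ∀ x y : σ, forc q x → forc q y → SysCompat r x y)
    -- p forces "ḃ meets levels indexed by a cofinal subset of Λ"
    (hcof : ∀ q : P, q ≤ p → ∀ u : Λ, ∃ q' : P, q' ≤ q ∧ ∃ x : σ,
      forc q' x ∧ u ≤ ℓ x) :
    ∃ q₀ : P, q₀ ≤ p ∧ ∃ q₁ : P, q₁ ≤ p ∧ ∃ x₀ x₁ : σ,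
      forc q₀ x₀ ∧ forc q₁ x₁ ∧ ¬ SysCompat r x₀ x₁ :=
  stmt14_general ℓ r hnobranch P p forc hcof
end

section
/- Suppose μ is a singular cardinal, θ = cf(μ), λ = μ⁺, 𝒟 is a uniform transitive θ-covering matrix for λ, κ ∈ (θ⁺, μ) is regular, A = {x ∈ 𝒫_κ λ : cf(ssup(x)) > θ}, and for x ∈ A, γ_x < λ is least such that for all β ∈ [γ_x, λ) there is i < θ with x ∩ D(j,β) = x ∩ D(j,γ_x) for all j ∈ [i,θ) (such γ_x exists by downward coherence). Define S_x := {x ∩ D(i,γ_x) : i < θ and sup(x ∩ D(i,γ_x)) = sup(x)}. Then 𝒮 = ⟨S_x : x ∈ A⟩ is a narrow concrete 𝒫_κ λ-system of width at most θ: each S_x is nonempty, and for all x ⊆ y in A there is t ∈ S_y with t ∩ x ∈ S_x. -/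
/-!
Statement 17: With μ singular, θ = cf(μ), λ = μ⁺, 𝒟 a uniform transitive
θ-covering matrix for λ, κ ∈ (θ⁺, μ) regular, A = {x ∈ 𝒫_κ λ : cf(ssup x) > θ},
γ_x least as in downward coherence, and
S_x := {x ∩ D(i,γ_x) : i < θ, sup(x ∩ D(i,γ_x)) = sup(x)}, the structure
𝒮 = ⟨S_x : x ∈ A⟩ is a narrow concrete 𝒫_κ λ-system of width at most θ.
-/

open Cardinal

/-!
For `x ∈ A`, downward coherence at `γ_x` makes the traces `x ∩ D(i,γ_x)`, `i < θ`, cover `x`;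
as `cf(sup x) > θ`, one of these fewer than `cf(sup x)` sets is already cofinal in `x`, and
then so is every later one. For `x ⊆ y` in `A`, coherence at `max(γ_x, γ_y)` gives
`(y ∩ D(j,γ_y)) ∩ x = x ∩ D(j,γ_x)` for all large `j`, so one large `j` serves both sup
conditions at once. `A` is cofinal in `𝒫_κ λ`: adding to `y` a block of order type `θ⁺` above
`ssup y` raises the cofinality of the strong supremum to `θ⁺`.
-/

open Cardinal Set Order

section OrdinalSets

lemma supS_le_ssupS {x : Set Ordinal.{0}} (hx : BddAbove x) : supS x ≤ ssupS x :=
  csSup_le' fun a ha => (le_succ a).trans (le_csSup (succ_mono.map_bddAbove hx) ⟨a, ha, rfl⟩)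

lemma ssupS_eq_supS {x : Set Ordinal.{0}} (hx : BddAbove x) (hlim : IsSuccLimit (ssupS x)) :
    ssupS x = supS x := by
  refine le_antisymm (csSup_le' ?_) (supS_le_ssupS hx)
  rintro _ ⟨a, ha, rfl⟩
  have hsucc : succ a < ssupS x :=
    hlim.succ_lt ((lt_succ a).trans_le (le_csSup (succ_mono.map_bddAbove hx) ⟨a, ha, rfl⟩))
  obtain ⟨_, ⟨b, hb, rfl⟩, hab⟩ := exists_lt_of_lt_csSup ((nonempty_of_mem ha).image succ) hsucc
  exact (succ_le_of_lt (succ_lt_succ_iff.1 hab)).trans (le_csSup hx hb)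

lemma supS_eq_of_subset_of_supS_eq {s t x : Set Ordinal.{0}} (hx : BddAbove x) (hst : s ⊆ t)
    (htx : t ⊆ x) (hs : supS s = supS x) : supS t = supS x :=
  le_antisymm (csSup_le_csSup' hx htx) (hs ▸ csSup_le_csSup' (hx.mono htx) hst)

lemma lt_cof_supS_of_lt_cof_ssupS {x : Set Ordinal.{0}} (hx : BddAbove x) {c : Cardinal.{0}}
    (hc : 1 ≤ c) (h : c < (ssupS x).cof) : c < (supS x).cof := by
  rwa [← ssupS_eq_supS hx (Ordinal.one_lt_cof_iff.1 (hc.trans_lt h))]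

lemma exists_supS_inter_eq_supS {x I : Set Ordinal.{0}} {D : Ordinal.{0} → Set Ordinal.{0}}
    (hx : BddAbove x) (hcover : ∀ α ∈ x, ∃ i ∈ I, α ∈ D i)
    (hI : #I < Cardinal.lift.{1} (supS x).cof) : ∃ i ∈ I, supS (x ∩ D i) = supS x := by
  by_contra! hne
  have hlt : ∀ i : I, supS (x ∩ D i) < supS x := fun i =>
    (csSup_le_csSup' hx inter_subset_left).lt_of_ne (hne i i.2)
  have hbdd : BddAbove (range fun i : I => supS (x ∩ D i)) :=
    ⟨supS x, by rintro _ ⟨i, rfl⟩; exact (hlt i).le⟩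
  have hcard : Cardinal.lift.{0} #I < (Ordinal.lift.{1} (supS x)).cof := by
    rwa [Cardinal.lift_uzero, ← Ordinal.lift_cof]
  refine (Ordinal.lift_iSup_lt_of_lt_cof hcard hlt).not_ge (csSup_le' fun α hα => ?_)
  obtain ⟨i, hi, hαi⟩ := hcover α hα
  exact (le_csSup (hx.mono inter_subset_left) ⟨hα, hαi⟩).trans (le_ciSup hbdd ⟨i, hi⟩)

end OrdinalSets

def EventuallyBelow (o : Ordinal.{0}) (P : Ordinal.{0} → Prop) : Prop :=
  ∃ i < o, ∀ j, i ≤ j → j < o → P j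

namespace EventuallyBelow

variable {o : Ordinal.{0}} {P Q : Ordinal.{0} → Prop}

lemma and (hP : EventuallyBelow o P) (hQ : EventuallyBelow o Q) :
    EventuallyBelow o fun j => P j ∧ Q j := by
  obtain ⟨i, hi, hPi⟩ := hP
  obtain ⟨k, hk, hQk⟩ := hQ
  exact ⟨max i k, max_lt hi hk, fun j hj hjo =>
    ⟨hPi j (le_of_max_le_left hj) hjo, hQk j (le_of_max_le_right hj) hjo⟩⟩

lemma mono (hP : EventuallyBelow o P) (hPQ : ∀ j, P j → Q j) : EventuallyBelow o Q :=
  let ⟨i, hi, hPi⟩ := hP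
  ⟨i, hi, fun j hij hjo => hPQ j (hPi j hij hjo)⟩

lemma exists_lt (hP : EventuallyBelow o P) : ∃ j < o, P j :=
  let ⟨i, hi, hPi⟩ := hP
  ⟨i, hi, hPi i le_rfl hi⟩

end EventuallyBelow

namespace CovMatrix

variable {θ : Cardinal.{0}} {L : Ordinal.{0}} (M : CovMatrix θ L)

lemma eventually_mem_D {α β : Ordinal.{0}} (hαβ : α < β) (hβ : β < L) :
    EventuallyBelow θ.ord fun j => α ∈ M.D j β := by
  have hα : α ∈ ⋃ i ∈ Iio θ.ord, M.D i β := (M.union β hβ).symm ▸ hαβ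
  simp only [mem_iUnion, mem_Iio, exists_prop] at hα
  obtain ⟨i, hi, hαi⟩ := hα
  exact ⟨i, hi, fun j hij hj => M.mono hij hj hβ hαi⟩

def StabilizesAt (x : Set Ordinal.{0}) (δ : Ordinal.{0}) : Prop :=
  δ < L ∧ ∀ β, δ ≤ β → β < L →
    EventuallyBelow θ.ord fun j => x ∩ M.D j β = x ∩ M.D j δ

variable {M} {x y : Set Ordinal.{0}} {δ ε : Ordinal.{0}}

lemma StabilizesAt.exists_mem_D (h : M.StabilizesAt x δ) (hL : IsSuccLimit L) {α : Ordinal.{0}}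
    (hαx : α ∈ x) (hαL : α < L) : ∃ j < θ.ord, α ∈ M.D j δ := by
  have hβ : max δ (succ α) < L := max_lt h.1 (hL.succ_lt hαL)
  obtain ⟨j, hj, hstab, hαj⟩ := ((h.2 _ (le_max_left _ _) hβ).and
    (M.eventually_mem_D ((lt_succ α).trans_le (le_max_right _ _)) hβ)).exists_lt
  have hαxj : α ∈ x ∩ M.D j (max δ (succ α)) := ⟨hαx, hαj⟩
  exact ⟨j, hj, (hstab ▸ hαxj).2⟩

lemma StabilizesAt.eventually_supS_inter_eq (h : M.StabilizesAt x δ) (hL : IsSuccLimit L)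
    (hxL : ∀ α ∈ x, α < L) (hcof : θ < (supS x).cof) :
    EventuallyBelow θ.ord fun j => supS (x ∩ M.D j δ) = supS x := by
  have hx : BddAbove x := ⟨L, fun α hα => (hxL α hα).le⟩
  obtain ⟨i, hi, hsup⟩ := exists_supS_inter_eq_supS (I := Iio θ.ord) hx
    (fun α hα => h.exists_mem_D hL hα (hxL α hα))
    (by rwa [mk_Iio_ordinal, card_ord, Cardinal.lift_lt])
  exact ⟨i, hi, fun j hij hj => supS_eq_of_subset_of_supS_eq hx
    (inter_subset_inter_right _ (M.mono hij hj h.1)) inter_subset_left hsup⟩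

lemma StabilizesAt.eventually_inter_inter_eq (hx : M.StabilizesAt x δ)
    (hy : M.StabilizesAt y ε) (hxy : x ⊆ y) :
    EventuallyBelow θ.ord fun j => y ∩ M.D j ε ∩ x = x ∩ M.D j δ := by
  have hβ : max δ ε < L := max_lt hx.1 hy.1
  refine ((hx.2 _ (le_max_left _ _) hβ).and (hy.2 _ (le_max_right _ _) hβ)).mono ?_
  rintro j ⟨hxj, hyj⟩
  calc y ∩ M.D j ε ∩ x = y ∩ M.D j (max δ ε) ∩ x := by rw [hyj]
    _ = x ∩ M.D j (max δ ε) := by rw [inter_comm, ← inter_assoc, inter_eq_left.2 hxy]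
    _ = x ∩ M.D j δ := hxj

end CovMatrix

section Pk

variable {κ ν : Cardinal.{0}}

lemma bddAbove_of_mem_Pk {L : Ordinal.{0}} {x : Set Ordinal.{0}} (hx : x ∈ Pk κ L) : BddAbove x :=
  ⟨L, fun α hα => (hx.1 α hα).le⟩

lemma ssupS_lt_ord_of_mem_Pk (hν : ν.IsRegular) (hκν : κ ≤ ν) {y : Set Ordinal.{0}}
    (hy : y ∈ Pk κ ν.ord) : ssupS y < ν.ord := by
  refine Ordinal.sSup_lt_of_lt_cof ?_ ?_
  · rw [← Ordinal.lift_cof, hν.cof_ord]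
    exact mk_image_le.trans_lt (hy.2.trans_le (lift_le.2 hκν))
  · rintro _ ⟨a, ha, rfl⟩
    exact (isSuccLimit_ord hν.aleph0_le).succ_lt (hy.1 a ha)

lemma ssupS_union_image_add {y : Set Ordinal.{0}} (hy : BddAbove y) {o : Ordinal.{0}}
    (ho : IsSuccLimit o) : ssupS (y ∪ (ssupS y + ·) '' Iio o) = ssupS y + o := by
  have hub : ssupS y + o ∈ upperBounds (succ '' (y ∪ (ssupS y + ·) '' Iio o)) := by
    rintro _ ⟨a, ha | ⟨ξ, hξ, rfl⟩, rfl⟩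
    · exact (le_csSup (succ_mono.map_bddAbove hy) ⟨a, ha, rfl⟩).trans le_self_add
    · rw [succ_eq_add_one, add_assoc, ← succ_eq_add_one]
      exact add_le_add_right (succ_le_of_lt (mem_Iio.1 hξ)) _
  refine le_antisymm (csSup_le' hub) ((Ordinal.add_le_iff_of_isSuccLimit ho).2 fun ξ hξ => ?_)
  exact (le_succ _).trans (le_csSup ⟨_, hub⟩ ⟨_, Or.inr ⟨ξ, hξ, rfl⟩, rfl⟩)

lemma exists_superset_mem_Pk_cof_ssupS_eq {τ : Cardinal.{0}} (hν : ν.IsRegular) (hκν : κ ≤ ν)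
    (hτ : τ.IsRegular) (hτκ : τ < κ) {y : Set Ordinal.{0}} (hy : y ∈ Pk κ ν.ord) :
    ∃ x ∈ Pk κ ν.ord, y ⊆ x ∧ (ssupS x).cof = τ := by
  have hσ : ssupS y < ν.ord := ssupS_lt_ord_of_mem_Pk hν hκν hy
  have hτν : τ.ord < ν.ord := ord_lt_ord.2 (hτκ.trans_le hκν)
  have hτlim : IsSuccLimit τ.ord := isSuccLimit_ord hτ.aleph0_le
  have htail : #((ssupS y + ·) '' Iio τ.ord) < Cardinal.lift.{1} κ :=
    mk_image_le.trans_lt (by rwa [mk_Iio_ordinal, card_ord, lift_lt])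
  refine ⟨y ∪ (ssupS y + ·) '' Iio τ.ord, ⟨?_, ?_⟩, subset_union_left, ?_⟩
  · rintro _ (ha | ⟨ξ, hξ, rfl⟩)
    exacts [hy.1 _ ha, Ordinal.isPrincipal_add_ord hν.aleph0_le hσ (hξ.trans hτν)]
  · exact (mk_union_le _ _).trans_lt
      (add_lt_of_lt (aleph0_le_lift.2 (hτ.aleph0_le.trans hτκ.le)) hy.2 htail)
  · rw [ssupS_union_image_add (bddAbove_of_mem_Pk hy) hτlim,
      Ordinal.cof_add _ hτlim.ne_bot, hτ.cof_ord]

end Pk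

lemma mk_le_lift_of_subset_image_Iio_ord {θ : Cardinal.{0}} {S : Set (Set Ordinal.{0})}
    {f : Ordinal.{0} → Set Ordinal.{0}} (hS : S ⊆ f '' Iio θ.ord) : #S ≤ Cardinal.lift.{1} θ :=
  calc #S ≤ #(f '' Iio θ.ord) := mk_le_mk_of_subset hS
    _ ≤ #(Iio θ.ord) := mk_image_le
    _ = Cardinal.lift.{1} θ := by rw [mk_Iio_ordinal, card_ord]

theorem stmt17_general (μ θ κ : Cardinal.{0}) (L : Ordinal.{0})
    (hθ : θ = (μ.ord).cof) (hμinf : ℵ₀ ≤ μ)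
    (hθκ : Order.succ θ < κ) (hκμ : κ < μ)
    (hL : L = (Order.succ μ).ord)
    (M : CovMatrix θ L)
    (A : Set (Set Ordinal.{0}))
    (hA : A = {x | x ∈ Pk κ L ∧ θ < (ssupS x).cof})
    (γ : Set Ordinal.{0} → Ordinal.{0})
    -- γ_x is least with the downward-coherence property:
    (hγ : ∀ x ∈ A,
      (γ x < L ∧ ∀ β : Ordinal.{0}, γ x ≤ β → β < L →
        ∃ i : Ordinal.{0}, i < θ.ord ∧ ∀ j : Ordinal.{0}, i ≤ j → j < θ.ord →
          x ∩ M.D j β = x ∩ M.D j (γ x)) ∧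
      ∀ δ : Ordinal.{0}, δ < γ x →
        ¬ (δ < L ∧ ∀ β : Ordinal.{0}, δ ≤ β → β < L →
            ∃ i : Ordinal.{0}, i < θ.ord ∧ ∀ j : Ordinal.{0}, i ≤ j → j < θ.ord →
              x ∩ M.D j β = x ∩ M.D j δ))
    (S : Set Ordinal.{0} → Set (Set Ordinal.{0}))
    (hS : ∀ x : Set Ordinal.{0}, S x =
      {t | ∃ i : Ordinal.{0}, i < θ.ord ∧ t = x ∩ M.D i (γ x) ∧
        supS (x ∩ M.D i (γ x)) = supS x}) :
    -- 𝒮 = ⟨S_x : x ∈ A⟩ is a narrow concrete 𝒫_κ λ-system of width ≤ θ: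
    (∀ y ∈ Pk κ L, ∃ x ∈ A, y ⊆ x) ∧
    (∀ x ∈ A, (S x).Nonempty) ∧
    (∀ x ∈ A, ∀ t ∈ S x, t ⊆ x) ∧
    (∀ x ∈ A, ∀ y ∈ A, x ⊆ y → ∃ t ∈ S y, t ∩ x ∈ S x) ∧
    (∀ x ∈ A, #(S x) ≤ Cardinal.lift.{1} θ) := by
  subst hL
  have hθinf : ℵ₀ ≤ θ :=
    hθ ▸ Ordinal.aleph0_le_cof_iff.2 (Ordinal.one_lt_cof_iff.2 (isSuccLimit_ord hμinf))
  have hreg : (succ μ).IsRegular := isRegular_succ hμinf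
  have hstab : ∀ x ∈ A, M.StabilizesAt x (γ x) := fun x hx => (hγ x hx).1
  have hsup : ∀ x ∈ A, EventuallyBelow θ.ord fun j => supS (x ∩ M.D j (γ x)) = supS x := by
    intro x hx
    obtain ⟨hxPk, hcof⟩ : x ∈ Pk κ (succ μ).ord ∧ θ < (ssupS x).cof := by rwa [hA] at hx
    exact (hstab x hx).eventually_supS_inter_eq (isSuccLimit_ord hreg.aleph0_le) hxPk.1
      (lt_cof_supS_of_lt_cof_ssupS (bddAbove_of_mem_Pk hxPk) (one_le_aleph0.trans hθinf) hcof)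
  have hmemS : ∀ x, ∀ j < θ.ord, supS (x ∩ M.D j (γ x)) = supS x → x ∩ M.D j (γ x) ∈ S x :=
    fun x j hj h => (hS x) ▸ ⟨j, hj, rfl, h⟩
  have hSsub : ∀ x, S x ⊆ (fun j => x ∩ M.D j (γ x)) '' Iio θ.ord := by
    intro x t ht
    obtain ⟨j, hj, rfl, -⟩ := hS x ▸ ht
    exact ⟨j, hj, rfl⟩
  refine ⟨fun y hy => ?_, fun x hx => ?_, fun x _ t ht => ?_, fun x hx y hy hxy => ?_,
    fun x _ => mk_le_lift_of_subset_image_Iio_ord (hSsub x)⟩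
  · obtain ⟨x, hx, hyx, hcof⟩ := exists_superset_mem_Pk_cof_ssupS_eq hreg
      (hκμ.le.trans (le_succ μ)) (isRegular_succ hθinf) hθκ hy
    exact ⟨x, hA ▸ ⟨hx, hcof ▸ lt_succ θ⟩, hyx⟩
  · obtain ⟨j, hj, h⟩ := (hsup x hx).exists_lt
    exact ⟨_, hmemS x j hj h⟩
  · obtain ⟨j, -, rfl⟩ := hSsub x ht
    exact inter_subset_left
  · obtain ⟨j, hj, ⟨hsx, hsy⟩, hyx⟩ := (((hsup x hx).and (hsup y hy)).and
      ((hstab x hx).eventually_inter_inter_eq (hstab y hy) hxy)).exists_lt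
    exact ⟨_, hmemS y j hj hsy, hyx ▸ hmemS x j hj hsx⟩

theorem stmt17 (μ θ κ : Cardinal.{0}) (L : Ordinal.{0})
    (hθ : θ = (μ.ord).cof) (hμinf : ℵ₀ ≤ μ) (hsing : θ < μ)
    (hκreg : κ.IsRegular) (hθκ : Order.succ θ < κ) (hκμ : κ < μ)
    (hL : L = (Order.succ μ).ord)
    (M : CovMatrix θ L) (hMtr : M.IsTransitive) (hMun : M.IsUniform)
    (A : Set (Set Ordinal.{0}))
    (hA : A = {x | x ∈ Pk κ L ∧ θ < (ssupS x).cof})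
    (γ : Set Ordinal.{0} → Ordinal.{0})
    -- γ_x is least with the downward-coherence property:
    (hγ : ∀ x ∈ A,
      (γ x < L ∧ ∀ β : Ordinal.{0}, γ x ≤ β → β < L →
        ∃ i : Ordinal.{0}, i < θ.ord ∧ ∀ j : Ordinal.{0}, i ≤ j → j < θ.ord →
          x ∩ M.D j β = x ∩ M.D j (γ x)) ∧
      ∀ δ : Ordinal.{0}, δ < γ x →
        ¬ (δ < L ∧ ∀ β : Ordinal.{0}, δ ≤ β → β < L →
            ∃ i : Ordinal.{0}, i < θ.ord ∧ ∀ j : Ordinal.{0}, i ≤ j → j < θ.ord →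
              x ∩ M.D j β = x ∩ M.D j δ))
    (S : Set Ordinal.{0} → Set (Set Ordinal.{0}))
    (hS : ∀ x : Set Ordinal.{0}, S x =
      {t | ∃ i : Ordinal.{0}, i < θ.ord ∧ t = x ∩ M.D i (γ x) ∧
        supS (x ∩ M.D i (γ x)) = supS x}) :
    -- 𝒮 = ⟨S_x : x ∈ A⟩ is a narrow concrete 𝒫_κ λ-system of width ≤ θ:
    (∀ y ∈ Pk κ L, ∃ x ∈ A, y ⊆ x) ∧
    (∀ x ∈ A, (S x).Nonempty) ∧
    (∀ x ∈ A, ∀ t ∈ S x, t ⊆ x) ∧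
    (∀ x ∈ A, ∀ y ∈ A, x ⊆ y → ∃ t ∈ S y, t ∩ x ∈ S x) ∧
    (∀ x ∈ A, #(S x) ≤ Cardinal.lift.{1} θ) :=
  stmt17_general μ θ κ L hθ hμinf hθκ hκμ hL M A hA γ hγ S hS
end
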